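/- Suppose y ∈ W^{1,2}(-1,1) minimizes ∫_{-1}^{1}(y'(t))^2 dt subject to y(x) = 1 and ∫_{-1}^{1} t^k y(t) dt = 0 for k = 0,...,m-1, where x ∈ (-1,1). Then there exist a polynomial φ of degree at most m and a constant ζ such that y'(t) = φ(t) + ζ·χ_{(-1,x)}(t) almost everywhere on (-1,1), and y'(−1) = y'(1) = 0 in the sense that φ(-1) + ζ = 0 and φ(1) = 0. -/

import Mathlib

/-- `W12 y g` : `y` is absolutely continuous on `[-1,1]` with derivative `g ∈ L²(-1,1)`. -/
def W12 (y g : ℝ → ℝ) : Prop :=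
  IntervalIntegrable g MeasureTheory.volume (-1) 1 ∧
  IntervalIntegrable (fun t => g t ^ 2) MeasureTheory.volume (-1) 1 ∧
  ∀ t ∈ Set.Icc (-1 : ℝ) 1, y t = y (-1) + ∫ s in (-1 : ℝ)..t, g s

/-!
Put `P_k(t) = ∫_t^1 s^k ds` and `q_k = P_k - P_k(-1) χ_{(-1,x)}`. For `v ∈ L²(-1,1)` the
primitive `w(t) = ∫_{-1}^t v - ∫_{-1}^x v` vanishes at `x`, and by integration by parts
`∫ t^k w = ∫ q_k v`. Hence every `v` orthogonal to `q_0, …, q_{m-1}` is the derivative of an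
admissible variation `y + ε w`, and minimality forces `∫ g v = 0`. So `g` lies in the double
orthogonal complement of the finite-dimensional span of the `q_k` in `L²`, i.e. in the span
itself: `g = ∑ c_k q_k` a.e., which is the claim with `φ = ∑ c_k P_k` and `ζ = -∑ c_k P_k(-1)`.
-/

open MeasureTheory Set Polynomial
open scoped Interval

theorem MeasureTheory.Lp.coeFn_finset_sum {α E ι : Type*} [MeasurableSpace α] {μ : Measure α}
    [NormedAddCommGroup E] {p : ENNReal} (s : Finset ι) (f : ι → Lp E p μ) :
    ⇑(∑ i ∈ s, f i) =ᵐ[μ] ∑ i ∈ s, ⇑(f i) := by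
  induction s using Finset.cons_induction with
  | empty => simpa using Lp.coeFn_zero E p μ
  | cons i s _ ih =>
    simp only [Finset.sum_cons]
    exact (Lp.coeFn_add _ _).trans (Filter.EventuallyEq.rfl.add ih)

theorem MeasureTheory.exists_ae_eq_sum_of_forall_integral_mul_eq_zero {α ι : Type*}
    [MeasurableSpace α] {μ : Measure α} [Fintype ι] {q : ι → α → ℝ} (hq : ∀ i, MemLp (q i) 2 μ)
    {g : α → ℝ} (hg : MemLp g 2 μ)
    (h : ∀ v, MemLp v 2 μ → (∀ i, ∫ a, q i a * v a ∂μ = 0) → ∫ a, g a * v a ∂μ = 0) :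
    ∃ c : ι → ℝ, g =ᵐ[μ] fun a => ∑ i, c i * q i a := by
  have inner_toLp {f : α → ℝ} (hf : MemLp f 2 μ) (u : Lp ℝ 2 μ) :
      inner ℝ (hf.toLp f) u = ∫ a, f a * u a ∂μ := by
    rw [L2.inner_def]
    refine integral_congr_ae ?_
    filter_upwards [hf.coeFn_toLp] with a ha
    rw [ha, Real.inner_apply]
  set K : Submodule ℝ (Lp ℝ 2 μ) := Submodule.span ℝ (range fun i => (hq i).toLp (q i))
  have hgK : hg.toLp g ∈ Kᗮᗮ := by
    refine (Submodule.mem_orthogonal _ _).2 fun u hu => ?_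
    rw [real_inner_comm, inner_toLp]
    refine h u (Lp.memLp u) fun i => ?_
    rw [← inner_toLp (hq i)]
    exact (Submodule.mem_orthogonal _ _).1 hu _ (Submodule.subset_span ⟨i, rfl⟩)
  have : FiniteDimensional ℝ K := FiniteDimensional.span_of_finite ℝ (finite_range _)
  rw [K.orthogonal_orthogonal, Submodule.mem_span_range_iff_exists_fun] at hgK
  obtain ⟨c, hc⟩ := hgK
  refine ⟨c, ?_⟩
  filter_upwards [hg.coeFn_toLp, hc ▸ Lp.coeFn_finset_sum _ _,
    ae_all_iff.2 fun i => Lp.coeFn_smul (c i) ((hq i).toLp (q i)),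
    ae_all_iff.2 fun i => (hq i).coeFn_toLp] with a hga hsum hsmul hqi
  rw [← hga, hsum, Finset.sum_apply]
  simp [hsmul, hqi]

theorem intervalIntegral.integral_mul_primitive {a b : ℝ} {f v : ℝ → ℝ}
    (hf : IntervalIntegrable f volume a b) (hv : IntervalIntegrable v volume a b) :
    ∫ t in a..b, f t * ∫ s in a..t, v s = ∫ s in a..b, v s * ∫ t in s..b, f t := by
  have hacv := hv.absolutelyContinuousOnInterval_intervalIntegral left_mem_uIcc
  have hacf := hf.absolutelyContinuousOnInterval_intervalIntegral right_mem_uIcc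
  have ibp := hacv.integral_mul_deriv_eq_deriv_mul hacf
  have hderiv_f : ∀ᵐ t, t ∈ Ι a b → deriv (fun s => ∫ u in b..s, f u) t = f t := by
    filter_upwards [hf.ae_hasDerivAt_integral] with t ht htab
    exact (ht (uIoc_subset_uIcc htab) b right_mem_uIcc).deriv
  have hderiv_v : ∀ᵐ t, t ∈ Ι a b → deriv (fun s => ∫ u in a..s, v u) t = v t := by
    filter_upwards [hv.ae_hasDerivAt_integral] with t ht htab
    exact (ht (uIoc_subset_uIcc htab) a left_mem_uIcc).deriv
  rw [intervalIntegral.integral_congr_ae (g := fun t => f t * ∫ s in a..t, v s)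
      (hderiv_f.mono fun t ht htab => by rw [ht htab, mul_comm]),
    intervalIntegral.integral_congr_ae
      (f := fun t => deriv (fun s => ∫ u in a..s, v u) t * ∫ u in b..t, f u)
      (g := fun t => v t * ∫ u in b..t, f u)
      (hderiv_v.mono fun t ht htab => by rw [ht htab])] at ibp
  rw [ibp]
  simp only [intervalIntegral.integral_same, mul_zero, zero_mul, sub_zero, zero_sub,
    ← intervalIntegral.integral_neg]
  simp_rw [← mul_neg, ← intervalIntegral.integral_symm]

theorem intervalIntegral.integral_indicator_Ioo {a b x : ℝ} (hx : x ∈ Icc a b) (v : ℝ → ℝ) :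
    ∫ t in a..b, (Ioo a x).indicator v t = ∫ t in a..x, v t := by
  rw [intervalIntegral.integral_of_le (hx.1.trans hx.2), intervalIntegral.integral_of_le hx.1,
    MeasureTheory.integral_indicator measurableSet_Ioo, Measure.restrict_restrict measurableSet_Ioo,
    inter_eq_left.2 (Ioo_subset_Ioc_self.trans (Ioc_subset_Ioc_right hx.2)),
    integral_Ioc_eq_integral_Ioo]

noncomputable def tailMoment (k : ℕ) : ℝ[X] := C ((k : ℝ) + 1)⁻¹ * (1 - X ^ (k + 1))

theorem eval_tailMoment (k : ℕ) (t : ℝ) : (tailMoment k).eval t = ∫ s in t..1, s ^ k := by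
  rw [integral_pow, tailMoment]
  simp only [eval_mul, eval_C, eval_sub, eval_one, eval_pow, eval_X, one_pow]
  field_simp

theorem natDegree_tailMoment_le (k : ℕ) : (tailMoment k).natDegree ≤ k + 1 := by
  refine (natDegree_C_mul_le _ _).trans ((natDegree_sub_le _ _).trans ?_)
  simp

noncomputable def momentKernel (x : ℝ) (k : ℕ) (t : ℝ) : ℝ :=
  (tailMoment k).eval t - (tailMoment k).eval (-1) * (Ioo (-1) x).indicator 1 t

theorem memLp_momentKernel (x : ℝ) (k : ℕ) :
    MemLp (momentKernel x k) 2 (volume.restrict (Ioc (-1) 1)) := by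
  have hP := (tailMoment k).continuous
  refine ((memLp_two_iff_integrable_sq hP.aestronglyMeasurable).2
    (hP.pow 2).integrableOn_Ioc).sub ?_
  exact (memLp_indicator_const 2 measurableSet_Ioo (1 : ℝ)
    (Or.inr (measure_ne_top _ _))).const_mul _

theorem integral_pow_mul_primitive_sub {x : ℝ} (hx : x ∈ Icc (-1 : ℝ) 1) {v : ℝ → ℝ}
    (hv : IntervalIntegrable v volume (-1) 1) (k : ℕ) :
    ∫ t in (-1 : ℝ)..1, t ^ k * ((∫ s in (-1)..t, v s) - ∫ s in (-1)..x, v s) =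
      ∫ t in (-1 : ℝ)..1, momentKernel x k t * v t := by
  have hW : ContinuousOn (fun t => ∫ s in (-1)..t, v s) [[-1, 1]] :=
    intervalIntegral.continuousOn_primitive_interval' hv left_mem_uIcc
  have hpow : Continuous fun t : ℝ => t ^ k := continuous_pow k
  have hind : ∀ t, (Ioo (-1) x).indicator 1 t * v t = (Ioo (-1) x).indicator v t := fun t => by
    rw [← indicator_mul_left]; simp only [Pi.one_apply, one_mul]
  simp only [mul_sub, momentKernel, sub_mul, mul_assoc, hind]
  rw [intervalIntegral.integral_sub ((hpow.continuousOn.fun_mul hW).intervalIntegrable)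
      (hpow.intervalIntegrable _ _ |>.mul_const _),
    intervalIntegral.integral_sub (hv.continuousOn_mul (tailMoment k).continuous.continuousOn)
      (IntervalIntegrable.const_mul ⟨hv.1.indicator measurableSet_Ioo,
        hv.2.indicator measurableSet_Ioo⟩ _),
    intervalIntegral.integral_mul_const, intervalIntegral.integral_const_mul,
    intervalIntegral.integral_mul_primitive (intervalIntegral.intervalIntegrable_pow k) hv,
    intervalIntegral.integral_indicator_Ioo hx,
    ← eval_tailMoment]
  simp_rw [eval_tailMoment, mul_comm]

theorem w12_iff {y g : ℝ → ℝ} :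
    W12 y g ↔ MemLp g 2 (volume.restrict (Ioc (-1) 1)) ∧
      ∀ t ∈ Icc (-1 : ℝ) 1, y t = y (-1) + ∫ s in (-1)..t, g s := by
  simp only [W12, intervalIntegrable_iff_integrableOn_Ioc_of_le (by norm_num : (-1 : ℝ) ≤ 1)]
  constructor
  · rintro ⟨hg, hg2, hy⟩
    exact ⟨(memLp_two_iff_integrable_sq hg.aestronglyMeasurable).2 hg2, hy⟩
  · rintro ⟨hg, hy⟩
    exact ⟨hg.integrable one_le_two, hg.integrable_sq, hy⟩

theorem W12.continuousOn {y g : ℝ → ℝ} (hy : W12 y g) : ContinuousOn y (Icc (-1) 1) := by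
  refine ContinuousOn.congr ?_ hy.2.2
  rw [← uIcc_of_le (by norm_num : (-1 : ℝ) ≤ 1)]
  exact continuousOn_const.add
    (intervalIntegral.continuousOn_primitive_interval' hy.1 left_mem_uIcc)

theorem W12.intervalIntegrable_pow_mul {y g : ℝ → ℝ} (hy : W12 y g) (k : ℕ) :
    IntervalIntegrable (fun t => t ^ k * y t) volume (-1) 1 := by
  refine ContinuousOn.intervalIntegrable ?_
  rw [uIcc_of_le (by norm_num : (-1 : ℝ) ≤ 1)]
  exact (continuous_pow k).continuousOn.mul hy.continuousOn

theorem W12.add_const_mul {y g w v : ℝ → ℝ} (hy : W12 y g) (hw : W12 w v) (ε : ℝ) :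
    W12 (fun t => y t + ε * w t) (fun t => g t + ε * v t) := by
  refine w12_iff.2 ⟨(w12_iff.1 hy).1.add ((w12_iff.1 hw).1.const_mul ε), fun t ht => ?_⟩
  have hsub : [[-1, t]] ⊆ [[-1, (1 : ℝ)]] :=
    uIcc_subset_uIcc left_mem_uIcc (by rwa [uIcc_of_le (by norm_num : (-1 : ℝ) ≤ 1)])
  rw [intervalIntegral.integral_add (hy.1.mono_set hsub) ((hw.1.mono_set hsub).const_mul ε),
    intervalIntegral.integral_const_mul, hy.2.2 t ht, hw.2.2 t ht]
  ring

theorem w12_primitive_sub {v : ℝ → ℝ} (hv : MemLp v 2 (volume.restrict (Ioc (-1) 1))) (c : ℝ) :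
    W12 (fun t => (∫ s in (-1)..t, v s) - c) v :=
  w12_iff.2 ⟨hv, fun t _ => by simp only [intervalIntegral.integral_same]; ring⟩

theorem W12.integral_mul_eq_zero_of_minimal {m : ℕ} {x : ℝ} {y g : ℝ → ℝ} (hW : W12 y g)
    (hyx : y x = 1) (hmom : ∀ k < m, (∫ t in (-1:ℝ)..1, t ^ k * y t) = 0)
    (hmin : ∀ z h : ℝ → ℝ, W12 z h → z x = 1 →
      (∀ k < m, (∫ t in (-1:ℝ)..1, t ^ k * z t) = 0) →
      (∫ t in (-1:ℝ)..1, (g t) ^ 2) ≤ ∫ t in (-1:ℝ)..1, (h t) ^ 2)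
    {w v : ℝ → ℝ} (hw : W12 w v) (hwx : w x = 0)
    (hwmom : ∀ k < m, (∫ t in (-1:ℝ)..1, t ^ k * w t) = 0) :
    ∫ t in (-1:ℝ)..1, g t * v t = 0 := by
  have hg := (w12_iff.1 hW).1
  have hv := (w12_iff.1 hw).1
  have hexpand (ε : ℝ) : ∫ t in (-1:ℝ)..1, (g t + ε * v t) ^ 2 =
      (∫ t in (-1:ℝ)..1, g t ^ 2) + 2 * ε * (∫ t in (-1:ℝ)..1, g t * v t) +
        ε ^ 2 * ∫ t in (-1:ℝ)..1, v t ^ 2 := by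
    have hgv : Integrable (fun t => g t * v t) (volume.restrict (Ioc (-1) 1)) :=
      hg.integrable_mul hv
    have hsq (t : ℝ) :
        (g t + ε * v t) ^ 2 = g t ^ 2 + (2 * ε * (g t * v t) + ε ^ 2 * v t ^ 2) := by
      ring
    simp only [intervalIntegral.integral_of_le (by norm_num : (-1 : ℝ) ≤ 1), hsq]
    rw [integral_add hg.integrable_sq ((hgv.const_mul _).fun_add (hv.integrable_sq.const_mul _)),
      integral_add (hgv.const_mul _) (hv.integrable_sq.const_mul _), integral_const_mul,
      integral_const_mul, add_assoc]
  have hquad (ε : ℝ) : 0 ≤ (∫ t in (-1:ℝ)..1, v t ^ 2) * (ε * ε) +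
      (2 * ∫ t in (-1:ℝ)..1, g t * v t) * ε + 0 := by
    have hmom_ε (k : ℕ) (hk : k < m) : ∫ t in (-1:ℝ)..1, t ^ k * (y t + ε * w t) = 0 := by
      simp only [mul_add, mul_left_comm _ ε]
      rw [intervalIntegral.integral_add (hW.intervalIntegrable_pow_mul k)
        ((hw.intervalIntegrable_pow_mul k).const_mul ε), intervalIntegral.integral_const_mul,
        hmom k hk, hwmom k hk, mul_zero, add_zero]
    have := hmin _ _ (hW.add_const_mul hw ε) (by simp [hyx, hwx]) hmom_ε
    rw [hexpand] at this
    nlinarith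
  have := discrim_le_zero hquad
  rw [discrim] at this
  nlinarith [sq_nonneg (∫ t in (-1:ℝ)..1, g t * v t)]

theorem optimality_condition (m : ℕ) (x : ℝ) (hx : x ∈ Set.Ioo (-1:ℝ) 1)
    (y g : ℝ → ℝ) (hW : W12 y g) (hyx : y x = 1)
    (hmom : ∀ k < m, (∫ t in (-1:ℝ)..1, t ^ k * y t) = 0)
    (hmin : ∀ z h : ℝ → ℝ, W12 z h → z x = 1 →
      (∀ k < m, (∫ t in (-1:ℝ)..1, t ^ k * z t) = 0) →
      (∫ t in (-1:ℝ)..1, (g t) ^ 2) ≤ ∫ t in (-1:ℝ)..1, (h t) ^ 2) :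
    ∃ (φ : Polynomial ℝ) (ζ : ℝ), φ.natDegree ≤ m ∧
      (∀ᵐ t ∂(MeasureTheory.volume.restrict (Set.Ioo (-1:ℝ) 1)),
        g t = φ.eval t + ζ * (if t ∈ Set.Ioo (-1:ℝ) x then 1 else 0)) ∧
      φ.eval (-1) + ζ = 0 ∧ φ.eval 1 = 0 := by
  have h11 : (-1 : ℝ) ≤ 1 := by norm_num
  obtain ⟨c, hc⟩ := exists_ae_eq_sum_of_forall_integral_mul_eq_zero
    (q := fun k : Fin m => momentKernel x k) (fun k => memLp_momentKernel x k) (w12_iff.1 hW).1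
    fun v hv hqv => by
      rw [← intervalIntegral.integral_of_le h11]
      refine hW.integral_mul_eq_zero_of_minimal hyx hmom hmin (w12_primitive_sub hv _)
        (sub_self _) fun k hk => ?_
      rw [integral_pow_mul_primitive_sub (Ioo_subset_Icc_self hx) (w12_primitive_sub hv 0).1 k,
        intervalIntegral.integral_of_le h11]
      exact hqv ⟨k, hk⟩
  refine ⟨∑ k : Fin m, C (c k) * tailMoment k, -∑ k : Fin m, c k * (tailMoment k).eval (-1),
    natDegree_sum_le_of_forall_le _ _ fun k _ => ?_, ?_, ?_, ?_⟩
  · exact (natDegree_C_mul_le _ _).trans ((natDegree_tailMoment_le k).trans k.isLt)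
  · filter_upwards [ae_restrict_of_ae_restrict_of_subset Ioo_subset_Ioc_self hc] with t ht
    simp only [ht, momentKernel, eval_finsetSum, eval_mul, eval_C, indicator_apply, mul_sub,
      Finset.sum_sub_distrib]
    split_ifs <;> simp [sub_eq_add_neg]
  · simp [eval_finsetSum]
  · simp [eval_finsetSum, tailMoment]
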